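/- For every μ > 0, the matrices P_μ := I_m + μ·S·D and A_μ := I_m + μ·Iinv·D are invertible, P_μ⁻¹A_μ − I_m has rank at most one, and the characteristic polynomial of P_μ⁻¹A_μ equals (X − 1)^{m−1}·(X − 2/(2 − z(μ))), where z(μ) := eᵀ(μ⁻¹D⁻¹ + Iinv)⁻¹e ∈ [0,2). -/
import Mathlib


open Matrix

/-- The sinc integrand `sin(πt)/(πt)`, extended by the value 1 at `t = 0`. -/
noncomputable def sincFn (t : ℝ) : ℝ :=
  if t = 0 then 1 else Real.sin (Real.pi * t) / (Real.pi * t)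

/-- The `m × m` Toeplitz matrix `Iinv(k,l) = 1/2 + ∫₀^{k-l} sin(πt)/(πt) dt`. -/
noncomputable def IinvMat (m : ℕ) : Matrix (Fin m) (Fin m) ℝ :=
  fun k l => 1 / 2 + ∫ t in (0 : ℝ)..((k : ℝ) - (l : ℝ)), sincFn t

/-- The skew-symmetric part `S = (Iinv - Iinvᵀ)/2`. -/
noncomputable def Smat (m : ℕ) : Matrix (Fin m) (Fin m) ℝ :=
  (2 : ℝ)⁻¹ • (IinvMat m - (IinvMat m)ᵀ)

/-- The all-ones vector `e ∈ ℝ^m`. -/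
def eVec (m : ℕ) : Fin m → ℝ := fun _ => 1

lemma sincFn_neg (t : ℝ) : sincFn (-t) = sincFn t := by
  unfold sincFn
  rcases eq_or_ne t 0 with rfl | ht
  · simp
  · rw [if_neg (neg_ne_zero.mpr ht), if_neg ht, mul_neg, Real.sin_neg, neg_div_neg_eq]

lemma sincFn_integral_neg (a : ℝ) :
    (∫ t in (0:ℝ)..(-a), sincFn t) = -∫ t in (0:ℝ)..a, sincFn t := by
  have h1 : (∫ t in (0:ℝ)..(-a), sincFn t) = ∫ t in (0:ℝ)..(-a), sincFn (-t) := by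
    simp [sincFn_neg]
  rw [h1, intervalIntegral.integral_comp_neg, neg_neg, neg_zero,
    intervalIntegral.integral_symm]

lemma IinvMat_add_eq (m : ℕ) (k l : Fin m) : IinvMat m k l + IinvMat m l k = 1 := by
  unfold IinvMat
  have h : ((l : ℝ) - (k : ℝ)) = -((k : ℝ) - (l : ℝ)) := by ring
  rw [h, sincFn_integral_neg]
  ring

lemma IinvMat_decomp (m : ℕ) :
    IinvMat m = Smat m + (2:ℝ)⁻¹ • Matrix.vecMulVec (eVec m) (eVec m) := by
  ext k l
  have h := IinvMat_add_eq m k l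
  simp only [Smat, Matrix.add_apply, Matrix.smul_apply, Matrix.sub_apply,
    Matrix.transpose_apply, Matrix.vecMulVec_apply, eVec, smul_eq_mul]
  linarith

lemma Smat_skew (m : ℕ) (y : Fin m → ℝ) : y ⬝ᵥ (Smat m) *ᵥ y = 0 := by
  have hT : (Smat m)ᵀ = -(Smat m) := by
    ext k l
    simp only [Smat, Matrix.transpose_apply, Matrix.smul_apply, Matrix.sub_apply,
      Matrix.neg_apply, smul_eq_mul]
    ring
  have h1 : y ⬝ᵥ (Smat m) *ᵥ y = ((Smat m)ᵀ *ᵥ y) ⬝ᵥ y := by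
    rw [Matrix.dotProduct_mulVec, Matrix.mulVec_transpose]
  rw [hT, Matrix.neg_mulVec, neg_dotProduct] at h1
  have h2 : (Smat m *ᵥ y) ⬝ᵥ y = y ⬝ᵥ (Smat m *ᵥ y) := dotProduct_comm _ _
  linarith

lemma dot_diag_pos {m : ℕ} (d : Fin m → ℝ) (hd : ∀ j, 0 < d j) {x : Fin m → ℝ} (hx : x ≠ 0) :
    0 < (Matrix.diagonal d *ᵥ x) ⬝ᵥ x := by
  have h : (Matrix.diagonal d *ᵥ x) ⬝ᵥ x = ∑ i, d i * (x i * x i) := by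
    simp [dotProduct, Matrix.mulVec_diagonal, mul_assoc]
  rw [h]
  obtain ⟨i, hi⟩ := Function.ne_iff.mp hx
  refine Finset.sum_pos' (fun j _ => mul_nonneg (hd j).le (mul_self_nonneg _)) ⟨i, Finset.mem_univ i, ?_⟩
  exact mul_pos (hd i) (mul_self_pos.mpr hi)

lemma isUnit_one_add {m : ℕ} (M : Matrix (Fin m) (Fin m) ℝ)
    (hM : ∀ y, 0 ≤ y ⬝ᵥ M *ᵥ y) (d : Fin m → ℝ) (hd : ∀ j, 0 < d j)
    (μ : ℝ) (hμ : 0 < μ) :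
    IsUnit ((1 : Matrix (Fin m) (Fin m) ℝ) + μ • (M * Matrix.diagonal d)) := by
  rw [Matrix.isUnit_iff_isUnit_det, isUnit_iff_ne_zero]
  intro h0
  obtain ⟨x, hx, hPx⟩ := Matrix.exists_mulVec_eq_zero_iff.mpr h0
  have h1 : (Matrix.diagonal d *ᵥ x) ⬝ᵥ (((1 : Matrix (Fin m) (Fin m) ℝ) + μ • (M * Matrix.diagonal d)) *ᵥ x) = 0 := by
    rw [hPx, dotProduct_zero]
  have h2 : (Matrix.diagonal d *ᵥ x) ⬝ᵥ (((1 : Matrix (Fin m) (Fin m) ℝ) + μ • (M * Matrix.diagonal d)) *ᵥ x)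
      = (Matrix.diagonal d *ᵥ x) ⬝ᵥ x
        + μ * ((Matrix.diagonal d *ᵥ x) ⬝ᵥ (M *ᵥ (Matrix.diagonal d *ᵥ x))) := by
    rw [Matrix.add_mulVec, Matrix.one_mulVec, dotProduct_add,
      Matrix.smul_mulVec, dotProduct_smul, Matrix.mulVec_mulVec, smul_eq_mul]
  have h3 := dot_diag_pos d hd hx
  have h4 := hM (Matrix.diagonal d *ᵥ x)
  nlinarith

lemma mul_vecMulVec' {m : ℕ} (M : Matrix (Fin m) (Fin m) ℝ) (a b : Fin m → ℝ) :
    M * Matrix.vecMulVec a b = Matrix.vecMulVec (M *ᵥ a) b := by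
  ext i j
  simp [Matrix.mul_apply, Matrix.vecMulVec_apply, Matrix.mulVec, dotProduct,
    Finset.sum_mul, mul_assoc]

lemma smul_vecMulVec' {m : ℕ} (c : ℝ) (a b : Fin m → ℝ) :
    c • Matrix.vecMulVec a b = Matrix.vecMulVec (c • a) b := by
  ext i j
  simp [Matrix.vecMulVec_apply, smul_eq_mul, mul_assoc]

open Polynomial in
lemma charpoly_one_add_vecMulVec (n : ℕ) (u v : Fin (n+1) → ℝ) :
    Matrix.charpoly (1 + Matrix.vecMulVec u v) =
      (X - 1) ^ n * (X - C (1 + v ⬝ᵥ u)) := by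
  classical
  have hinj : Function.Injective (algebraMap (Polynomial ℝ) (FractionRing (Polynomial ℝ))) :=
    IsFractionRing.injective _ _
  apply hinj
  set φ : Polynomial ℝ →+* FractionRing (Polynomial ℝ) :=
    (algebraMap (Polynomial ℝ) (FractionRing (Polynomial ℝ)) : _) with hφ
  set ψ : ℝ →+* FractionRing (Polynomial ℝ) := φ.comp (Polynomial.C) with hψ
  set t : FractionRing (Polynomial ℝ) := φ X - 1 with ht
  have ht0 : t ≠ 0 := by
    intro h
    have h1 : φ ((X : Polynomial ℝ) - 1) = φ 0 := by
      rw [map_sub, _root_.map_one, map_zero]; exact h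
    have h2 : (X : Polynomial ℝ) - 1 = 0 := hinj h1
    have h3 : (X : Polynomial ℝ) - Polynomial.C 1 ≠ 0 := Polynomial.X_sub_C_ne_zero 1
    rw [Polynomial.C_1] at h3
    exact h3 h2
  set s : FractionRing (Polynomial ℝ) := ψ (v ⬝ᵥ u) with hs
  have hmap : ((Matrix.charmatrix (1 + Matrix.vecMulVec u v)).map φ)
      = t • 1 - Matrix.vecMulVec (fun i => ψ (u i)) (fun i => ψ (v i)) := by
    ext i j
    rcases eq_or_ne i j with rfl | hij
    · simp only [Matrix.map_apply, Matrix.charmatrix_apply_eq, Matrix.add_apply,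
        Matrix.one_apply_eq, Matrix.vecMulVec_apply, Matrix.sub_apply, Matrix.smul_apply,
        smul_eq_mul, map_sub, map_add, _root_.map_one, _root_.map_mul, Polynomial.C_1,
        Polynomial.C_mul, ht, hψ, RingHom.comp_apply]
      ring
    · simp only [Matrix.map_apply, Matrix.charmatrix_apply_ne _ _ _ hij, Matrix.add_apply,
        Matrix.one_apply_ne hij, Matrix.vecMulVec_apply, Matrix.sub_apply, Matrix.smul_apply,
        Matrix.one_apply_ne hij, smul_eq_mul, map_neg, map_add, _root_.map_mul,
        Polynomial.C_mul, zero_add, mul_zero, zero_sub, ht, hψ, RingHom.comp_apply]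
  have hfac : t • (1 : Matrix (Fin (n+1)) (Fin (n+1)) (FractionRing (Polynomial ℝ)))
        - Matrix.vecMulVec (fun i => ψ (u i)) (fun i => ψ (v i))
      = t • (1 + Matrix.vecMulVec ((-(t⁻¹)) • fun i => ψ (u i)) (fun i => ψ (v i))) := by
    ext i j
    rcases eq_or_ne i j with rfl | hij
    · simp only [Matrix.sub_apply, Matrix.add_apply, Matrix.smul_apply, Matrix.one_apply_eq,
        Matrix.vecMulVec_apply, Pi.smul_apply, smul_eq_mul]
      field_simp
      ring
    · simp only [Matrix.sub_apply, Matrix.add_apply, Matrix.smul_apply,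
        Matrix.one_apply_ne hij, Matrix.vecMulVec_apply, Pi.smul_apply, smul_eq_mul]
      field_simp
      ring
  have hdot : (fun i => ψ (v i)) ⬝ᵥ (fun i => ψ (u i)) = s := by
    simp [hs, dotProduct, _root_.map_sum, _root_.map_mul]
  have hlhs : φ (Matrix.charpoly (1 + Matrix.vecMulVec u v)) = t ^ n * (t - s) := by
    rw [Matrix.charpoly, RingHom.map_det, RingHom.mapMatrix_apply, hmap, hfac,
      Matrix.det_smul, Matrix.vecMulVec_eq Unit, Matrix.det_one_add_replicateCol_mul_replicateRow,
      dotProduct_smul, hdot]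
    have hcard : Fintype.card (Fin (n+1)) = n + 1 := by simp
    rw [hcard, smul_eq_mul]
    field_simp
    ring
  have hC : φ (C (1 + v ⬝ᵥ u)) = 1 + s := by
    have h9 : (C (1 + v ⬝ᵥ u) : Polynomial ℝ) = 1 + C (v ⬝ᵥ u) := by
      rw [map_add, Polynomial.C_1]
    rw [h9, map_add, _root_.map_one, hs, hψ, RingHom.comp_apply]
  rw [hlhs, _root_.map_mul, map_pow, map_sub, map_sub, _root_.map_one, hC, ht]
  ring

open Polynomial in
theorem stmt6 (m : ℕ) (hm : 1 ≤ m) (d : Fin m → ℝ) (hd : ∀ j, 0 < d j)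
    (μ : ℝ) (hμ : 0 < μ) :
    let D : Matrix (Fin m) (Fin m) ℝ := Matrix.diagonal d
    let P : Matrix (Fin m) (Fin m) ℝ := 1 + μ • (Smat m * D)
    let A : Matrix (Fin m) (Fin m) ℝ := 1 + μ • (IinvMat m * D)
    let z : ℝ := eVec m ⬝ᵥ (μ⁻¹ • D⁻¹ + IinvMat m)⁻¹.mulVec (eVec m)
    IsUnit P ∧ IsUnit A ∧ z ∈ Set.Ico (0 : ℝ) 2 ∧
      (P⁻¹ * A - 1).rank ≤ 1 ∧
      (P⁻¹ * A).charpoly = (X - 1) ^ (m - 1) * (X - C (2 / (2 - z))) := by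
  obtain ⟨n, rfl⟩ : ∃ n, m = n + 1 := ⟨m - 1, (Nat.succ_pred_eq_of_pos hm).symm⟩
  intro D P A z
  -- basic quadratic form facts
  have hIinvQ : ∀ y : Fin (n+1) → ℝ, 0 ≤ y ⬝ᵥ (IinvMat (n+1)) *ᵥ y := by
    intro y
    have hE : y ⬝ᵥ (Matrix.vecMulVec (eVec (n+1)) (eVec (n+1))) *ᵥ y
        = (eVec (n+1) ⬝ᵥ y) * (eVec (n+1) ⬝ᵥ y) := by
      simp [dotProduct, Matrix.vecMulVec_apply, Matrix.mulVec, eVec,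
        Finset.mul_sum, Finset.sum_mul]
      rw [Finset.sum_comm]
    rw [IinvMat_decomp (n+1), Matrix.add_mulVec, dotProduct_add, Smat_skew,
      Matrix.smul_mulVec, dotProduct_smul, hE, zero_add, smul_eq_mul]
    nlinarith [mul_self_nonneg (eVec (n+1) ⬝ᵥ y)]
  have hP : IsUnit P := isUnit_one_add (Smat (n+1)) (fun y => (Smat_skew (n+1) y).ge) d hd μ hμ
  have hA : IsUnit A := isUnit_one_add (IinvMat (n+1)) hIinvQ d hd μ hμ
  have hPdet : IsUnit P.det := (Matrix.isUnit_iff_isUnit_det P).mp hP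
  have hAdet : IsUnit A.det := (Matrix.isUnit_iff_isUnit_det A).mp hA
  have hDdet : IsUnit D.det := by
    rw [Matrix.det_diagonal, isUnit_iff_ne_zero]
    exact ne_of_gt (Finset.prod_pos fun j _ => hd j)
  -- decomposition A = P + (μ/2) • vecMulVec e d
  have hED : Matrix.vecMulVec (eVec (n+1)) (eVec (n+1)) * D = Matrix.vecMulVec (eVec (n+1)) d := by
    ext i j
    simp [Matrix.mul_apply, Matrix.vecMulVec_apply, eVec, D, Matrix.diagonal_apply,
      Finset.sum_ite_eq']
  have hdec : A = P + (μ/2) • Matrix.vecMulVec (eVec (n+1)) d := by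
    show (1 : Matrix (Fin (n+1)) (Fin (n+1)) ℝ) + μ • (IinvMat (n+1) * D)
        = 1 + μ • (Smat (n+1) * D) + (μ/2) • Matrix.vecMulVec (eVec (n+1)) d
    rw [IinvMat_decomp (n+1), Matrix.add_mul, Matrix.smul_mul, hED, smul_add, smul_smul,
      add_assoc, show μ * (2:ℝ)⁻¹ = μ / 2 from by ring]
  -- u := P⁻¹ e
  set u : Fin (n+1) → ℝ := P⁻¹ *ᵥ eVec (n+1) with hu
  clear_value u
  have hPu : P *ᵥ u = eVec (n+1) := by
    rw [hu, Matrix.mulVec_mulVec, Matrix.mul_nonsing_inv _ hPdet, Matrix.one_mulVec]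
  have he0 : eVec (n+1) ≠ 0 := by
    intro h
    have := congrFun h 0
    simp [eVec] at this
  have hu0 : u ≠ 0 := by
    intro h
    rw [h, Matrix.mulVec_zero] at hPu
    exact he0 hPu.symm
  set α : ℝ := d ⬝ᵥ u with hα
  have hαpos : 0 < α := by
    have h1 : (D *ᵥ u) ⬝ᵥ (P *ᵥ u)
        = (D *ᵥ u) ⬝ᵥ u + μ * ((D *ᵥ u) ⬝ᵥ (Smat (n+1) *ᵥ (D *ᵥ u))) := by
      show (D *ᵥ u) ⬝ᵥ (((1 : Matrix (Fin (n+1)) (Fin (n+1)) ℝ) + μ • (Smat (n+1) * D)) *ᵥ u) = _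
      rw [Matrix.add_mulVec, Matrix.one_mulVec, dotProduct_add,
        Matrix.smul_mulVec, dotProduct_smul, Matrix.mulVec_mulVec, smul_eq_mul]
    rw [hPu, Smat_skew, mul_zero, add_zero] at h1
    have h2 : (D *ᵥ u) ⬝ᵥ eVec (n+1) = α := by
      simp [hα, dotProduct, D, Matrix.mulVec_diagonal, eVec]
    rw [h2] at h1
    rw [h1]
    exact dot_diag_pos d hd hu0
  set lam : ℝ := 1 + μ / 2 * α with hlam
  have hlam1 : 1 < lam := by
    rw [hlam]; nlinarith
  have hlam0 : lam ≠ 0 := by linarith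
  -- A u = lam • e
  have hvu : Matrix.vecMulVec (eVec (n+1)) d *ᵥ u = α • eVec (n+1) := by
    ext i
    simp [Matrix.mulVec, dotProduct, Matrix.vecMulVec_apply, eVec, hα, smul_eq_mul]
  have hAu : A *ᵥ u = lam • eVec (n+1) := by
    rw [hdec, Matrix.add_mulVec, hPu, Matrix.smul_mulVec, hvu]
    ext i
    simp only [Pi.add_apply, Pi.smul_apply, eVec, smul_eq_mul, hlam]
    ring
  have hAinv_e : A⁻¹ *ᵥ eVec (n+1) = lam⁻¹ • u := by
    have h1 : A *ᵥ (lam⁻¹ • u) = eVec (n+1) := by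
      rw [Matrix.mulVec_smul, hAu, smul_smul, inv_mul_cancel₀ hlam0, one_smul]
    calc A⁻¹ *ᵥ eVec (n+1) = A⁻¹ *ᵥ (A *ᵥ (lam⁻¹ • u)) := by rw [h1]
      _ = lam⁻¹ • u := by
          rw [Matrix.mulVec_mulVec, Matrix.nonsing_inv_mul _ hAdet, Matrix.one_mulVec]
  -- compute z
  have hM : μ⁻¹ • D⁻¹ + IinvMat (n+1) = μ⁻¹ • (A * D⁻¹) := by
    show μ⁻¹ • D⁻¹ + IinvMat (n+1)
        = μ⁻¹ • (((1 : Matrix (Fin (n+1)) (Fin (n+1)) ℝ) + μ • (IinvMat (n+1) * D)) * D⁻¹)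
    rw [Matrix.add_mul, Matrix.one_mul, Matrix.smul_mul, smul_add, smul_smul,
      inv_mul_cancel₀ hμ.ne', one_smul, Matrix.mul_nonsing_inv_cancel_right _ _ hDdet]
  have hMinv : (μ⁻¹ • D⁻¹ + IinvMat (n+1))⁻¹ = μ • (D * A⁻¹) := by
    apply Matrix.inv_eq_right_inv
    rw [hM, Matrix.smul_mul, Matrix.mul_smul, smul_smul, inv_mul_cancel₀ hμ.ne', one_smul]
    have h1 : A * D⁻¹ * (D * A⁻¹) = A * (D⁻¹ * D * A⁻¹) := by
      rw [Matrix.mul_assoc, Matrix.mul_assoc]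
    rw [h1, Matrix.nonsing_inv_mul _ hDdet, Matrix.one_mul, Matrix.mul_nonsing_inv _ hAdet]
  have hz : z = μ * (lam⁻¹ * α) := by
    show eVec (n+1) ⬝ᵥ (μ⁻¹ • D⁻¹ + IinvMat (n+1))⁻¹ *ᵥ eVec (n+1) = _
    rw [hMinv, Matrix.smul_mulVec, dotProduct_smul, smul_eq_mul,
      ← Matrix.mulVec_mulVec, hAinv_e, Matrix.mulVec_smul, dotProduct_smul,
      smul_eq_mul]
    have : eVec (n+1) ⬝ᵥ (D *ᵥ u) = α := by
      simp [hα, dotProduct, D, Matrix.mulVec_diagonal, eVec]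
    rw [this]
  have hz' : z = μ * α / lam := by rw [hz]; field_simp
  have hzlt : 2 - z = 2 / lam := by
    rw [hz', hlam]
    field_simp
    ring
  have h2z : 2 / (2 - z) = lam := by
    rw [hzlt]
    field_simp
  -- P⁻¹ A structure
  have hPA : P⁻¹ * A = 1 + Matrix.vecMulVec ((μ/2) • u) d := by
    rw [hdec, Matrix.mul_add, Matrix.nonsing_inv_mul _ hPdet, Matrix.mul_smul,
      mul_vecMulVec', smul_vecMulVec', hu]
  refine ⟨hP, hA, ⟨?_, ?_⟩, ?_, ?_⟩
  · rw [hz']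
    positivity
  · have h1 : 0 < 2 / lam := by positivity
    linarith [hzlt ▸ h1]
  · have h1 : P⁻¹ * A - 1 = Matrix.vecMulVec ((μ/2) • u) d := by
      rw [hPA, add_sub_cancel_left]
    rw [h1, Matrix.vecMulVec_eq Unit]
    calc (Matrix.replicateCol Unit ((μ/2) • u) * Matrix.replicateRow Unit d).rank
        ≤ (Matrix.replicateCol Unit ((μ/2) • u)).rank := Matrix.rank_mul_le_left _ _
      _ ≤ Fintype.card Unit := Matrix.rank_le_card_width _
      _ = 1 := by simp
  · rw [hPA, charpoly_one_add_vecMulVec n ((μ/2) • u) d]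
    have hdd : d ⬝ᵥ ((μ/2) • u) = μ / 2 * α := by
      rw [dotProduct_smul, smul_eq_mul, hα]
    rw [hdd, ← hlam, h2z]
    norm_num
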